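/- Let (𝒳, ℓ_X) and (𝒴, ℓ_Y) be ℝ^d-LMMCs and let k ≥ 0 be an integer. (1) If d_WL^(k)((𝒳,ℓ_X),(𝒴,ℓ_Y)) = 0, then h((𝒳,ℓ_X)) = h((𝒴,ℓ_Y)) for every k-layer Markov chain neural network h ∈ 𝒩𝒩_k(ℝ^d). (2) If d_WL^(k)((𝒳,ℓ_X),(𝒴,ℓ_Y)) > 0, then there exists h ∈ 𝒩𝒩_k(ℝ^d) with h((𝒳,ℓ_X)) ≠ h((𝒴,ℓ_Y)). -/

import Mathlib

open scoped BigOperators NNReal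

namespace WLGW

variable {X Y W : Type*}

/-- A probability mass function on a finite type. -/
def IsPMF [Fintype X] (p : X → ℝ) : Prop :=
  (∀ x, 0 ≤ p x) ∧ ∑ x, p x = 1

/-- `γ` is a coupling of `p` and `q`. -/
def IsCoupling [Fintype X] [Fintype Y] (p : X → ℝ) (q : Y → ℝ) (γ : X → Y → ℝ) : Prop :=
  (∀ x y, 0 ≤ γ x y) ∧ (∀ x, ∑ y, γ x y = p x) ∧ (∀ y, ∑ x, γ x y = q y)

/-- `(m, μ)` is a measure Markov chain: each `m x` is a pmf, and `μ` is a fully supported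
stationary pmf. -/
def IsMMC [Fintype X] (m : X → X → ℝ) (μ : X → ℝ) : Prop :=
  (∀ x, IsPMF (m x)) ∧ IsPMF μ ∧ (∀ x, 0 < μ x) ∧ (∀ x', ∑ x, m x x' * μ x = μ x')

/-- `dX` is a metric on the finite type `X`. -/
def IsMetricOn [Fintype X] (dX : X → X → ℝ) : Prop :=
  (∀ x, dX x x = 0) ∧ (∀ x y, dX x y = dX y x) ∧ (∀ x y, x ≠ y → 0 < dX x y) ∧
    (∀ x y z, dX x z ≤ dX x y + dX y z)

/-- The iterated Weisfeiler–Lehman cost `D_k`. -/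
noncomputable def costIter [Fintype X] [Fintype Y] (mX : X → X → ℝ) (mY : Y → Y → ℝ)
    (D0 : X → Y → ℝ) : ℕ → X → Y → ℝ
  | 0 => D0
  | k + 1 => fun x y => sInf {r : ℝ | ∃ γ : X → Y → ℝ, IsCoupling (mX x) (mY y) γ ∧
      r = ∑ x', ∑ y', costIter mX mY D0 k x' y' * γ x' y'}

/-- The Weisfeiler–Lehman distance of depth `k` between two labeled measure Markov chains. -/
noncomputable def dWL {Z : Type*} [PseudoMetricSpace Z] [Fintype X] [Fintype Y]
    (mX : X → X → ℝ) (μX : X → ℝ) (ℓX : X → Z)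
    (mY : Y → Y → ℝ) (μY : Y → ℝ) (ℓY : Y → Z) (k : ℕ) : ℝ :=
  sInf {r : ℝ | ∃ γ : X → Y → ℝ, IsCoupling μX μY γ ∧
      r = ∑ x, ∑ y, costIter mX mY (fun x y => dist (ℓX x) (ℓY y)) k x y * γ x y}

/-- The absolute Weisfeiler–Lehman distance. -/
noncomputable def dWLsup {Z : Type*} [PseudoMetricSpace Z] [Fintype X] [Fintype Y]
    (mX : X → X → ℝ) (μX : X → ℝ) (ℓX : X → Z)
    (mY : Y → Y → ℝ) (μY : Y → ℝ) (ℓY : Y → Z) : ℝ :=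
  ⨆ k : ℕ, dWL mX μX ℓX mY μY ℓY k

/-- Isomorphism of labeled measure Markov chains. -/
def LMMCIso {Z : Type*} [Fintype X] [Fintype Y]
    (mX : X → X → ℝ) (μX : X → ℝ) (ℓX : X → Z)
    (mY : Y → Y → ℝ) (μY : Y → ℝ) (ℓY : Y → Z) : Prop :=
  ∃ ψ : X ≃ Y, (∀ x, ℓY (ψ x) = ℓX x) ∧ (∀ x x', mY (ψ x) (ψ x') = mX x x') ∧
    (∀ x, μY (ψ x) = μX x)

/-- The `q`-Markov kernel of a finite simple graph. -/
noncomputable def graphKernel {V : Type*} [Fintype V] [DecidableEq V] (G : SimpleGraph V) [DecidableRel G.Adj]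
    (q : ℝ) (v v' : V) : ℝ :=
  if G.degree v = 0 then (if v' = v then 1 else 0)
  else (if v' = v then q else 0) + (if G.Adj v v' then (1 - q) / (G.degree v : ℝ) else 0)

/-- The stationary degree measure of a finite simple graph. -/
noncomputable def graphMu {V : Type*} [Fintype V] (G : SimpleGraph V) [DecidableRel G.Adj]
    (v : V) : ℝ :=
  ((max (G.degree v) 1 : ℕ) : ℝ) / ∑ v', ((max (G.degree v') 1 : ℕ) : ℝ)

/-- The type of depth-`k` Weisfeiler–Lehman labels over an initial label set `Z`. -/
def WLType (Z : Type*) : ℕ → Type _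
  | 0 => Z
  | k + 1 => WLType Z k × Multiset (WLType Z k)

/-- The Weisfeiler–Lehman label hierarchy `ℓ^k` of a labeled graph. -/
def wlLabel {V Z : Type*} [Fintype V] (G : SimpleGraph V) [DecidableRel G.Adj] (ℓ : V → Z) :
    (k : ℕ) → V → WLType Z k
  | 0 => ℓ
  | k + 1 => fun v => (wlLabel G ℓ k v, (G.neighborFinset v).val.map (wlLabel G ℓ k))

/-- The multiset `L_k((G, ℓ))` of depth-`k` WL labels of all vertices. -/
def wlMultiset {V Z : Type*} [Fintype V] (G : SimpleGraph V) [DecidableRel G.Adj]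
    (ℓ : V → Z) (k : ℕ) : Multiset (WLType Z k) :=
  Finset.univ.val.map (wlLabel G ℓ k)

/-- The WL test distinguishes two labeled graphs. -/
def WLDistinguishes {V₁ V₂ Z : Type*} [Fintype V₁] [Fintype V₂]
    (G₁ : SimpleGraph V₁) [DecidableRel G₁.Adj] (ℓ₁ : V₁ → Z)
    (G₂ : SimpleGraph V₂) [DecidableRel G₂.Adj] (ℓ₂ : V₂ → Z) : Prop :=
  ∃ k, wlMultiset G₁ ℓ₁ k ≠ wlMultiset G₂ ℓ₂ k

/-- The relabeling `ℓ^g(v) = g(ℓ(v), deg v, |V|)`. -/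
def relabel {V Z Z₁ : Type*} [Fintype V] (G : SimpleGraph V) [DecidableRel G.Adj]
    (ℓ : V → Z) (g : Z × ℕ × ℕ → Z₁) : V → Z₁ :=
  fun v => g (ℓ v, G.degree v, Fintype.card V)

/-- `kpow m k = m^{⊗k}`, the `k`-step Markov kernel (`kpow m 0` is the identity kernel). -/
def kpow [Fintype X] [DecidableEq X] (m : X → X → ℝ) : ℕ → X → X → ℝ
  | 0 => fun x x' => if x' = x then 1 else 0
  | k + 1 => fun x x'' => ∑ x', kpow m k x' x'' * m x x'

/-- The Wasserstein distance between the pushforwards `(ℓX)_# p` and `(ℓY)_# q`, expressed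
through couplings of `p` and `q`. -/
noncomputable def wassersteinCost {Z : Type*} [PseudoMetricSpace Z] [Fintype X] [Fintype Y]
    (ℓX : X → Z) (ℓY : Y → Z) (p : X → ℝ) (q : Y → ℝ) : ℝ :=
  sInf {r : ℝ | ∃ γ : X → Y → ℝ, IsCoupling p q γ ∧
      r = ∑ x, ∑ y, dist (ℓX x) (ℓY y) * γ x y}

/-- The lower bound `d_WLLB^(k)` for the WL distance. -/
noncomputable def dWLLB {Z : Type*} [PseudoMetricSpace Z] [Fintype X] [Fintype Y]
    [DecidableEq X] [DecidableEq Y]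
    (mX : X → X → ℝ) (μX : X → ℝ) (ℓX : X → Z)
    (mY : Y → Y → ℝ) (μY : Y → ℝ) (ℓY : Y → Z) (k : ℕ) : ℝ :=
  sInf {r : ℝ | ∃ γ : X → Y → ℝ, IsCoupling μX μY γ ∧
      r = ∑ x, ∑ y, wassersteinCost ℓX ℓY (kpow mX k x) (kpow mY k y) * γ x y}

/-- Dimension sequence of an MCNN: `mcnnDim d dims 0 = d`, then `dims`. -/
def mcnnDim (d : ℕ) (dims : ℕ → ℕ) : ℕ → ℕ
  | 0 => d
  | i + 1 => dims i

/-- A `k`-layer Markov chain neural network on `ℝ^d`-LMMCs: Lipschitz maps `φ_1, …, φ_{k+1}`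
followed by a continuous map `ψ`. -/
structure MCNN (d k : ℕ) where
  dims : ℕ → ℕ
  φ : (i : ℕ) → EuclideanSpace ℝ (Fin (mcnnDim d dims i)) →
      EuclideanSpace ℝ (Fin (mcnnDim d dims (i + 1)))
  φ_lip : ∀ i, ∃ K : ℝ≥0, LipschitzWith K (φ i)
  ψ : EuclideanSpace ℝ (Fin (mcnnDim d dims (k + 1))) → ℝ
  ψ_cont : Continuous ψ

/-- Labels after `j` layers of an MCNN (the map `F_{φ_j} ∘ ⋯ ∘ F_{φ_1}`). -/
noncomputable def mcnnLabel {X : Type*} [Fintype X] {d k : ℕ} (N : MCNN d k)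
    (m : X → X → ℝ) (ℓ : X → EuclideanSpace ℝ (Fin d)) :
    (j : ℕ) → X → EuclideanSpace ℝ (Fin (mcnnDim d N.dims j))
  | 0 => ℓ
  | j + 1 => fun x => ∑ x', m x x' • N.φ j (mcnnLabel N m ℓ j x')

/-- Evaluation of an MCNN on an `ℝ^d`-LMMC: `ψ ∘ S_{φ_{k+1}} ∘ F_{φ_k} ∘ ⋯ ∘ F_{φ_1}`. -/
noncomputable def mcnnEval {X : Type*} [Fintype X] {d k : ℕ} (N : MCNN d k)
    (m : X → X → ℝ) (μ : X → ℝ) (ℓ : X → EuclideanSpace ℝ (Fin d)) : ℝ :=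
  N.ψ (∑ x, μ x • N.φ k (mcnnLabel N m ℓ k x))

/-- `k`-step couplings between the Markov kernels `mX` and `mY` (defined for `k ≥ 1`). -/
def IsStepCoupling [Fintype X] [Fintype Y] (mX : X → X → ℝ) (mY : Y → Y → ℝ) :
    ℕ → (X → Y → X → Y → ℝ) → Prop
  | 0, _ => False
  | 1, ν => ∀ x y, IsCoupling (mX x) (mY y) (ν x y)
  | k + 2, ν => ∃ νk ν1 : X → Y → X → Y → ℝ,
      IsStepCoupling mX mY (k + 1) νk ∧ (∀ x y, IsCoupling (mX x) (mY y) (ν1 x y)) ∧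
      ν = fun x y x' y' => ∑ x'', ∑ y'', νk x'' y'' x' y' * ν1 x y x'' y''

/-- The `k`-distortion `dis^(k)(γ, ν)`. -/
def disk [Fintype X] [Fintype Y] (dX : X → X → ℝ) (dY : Y → Y → ℝ)
    (γ : X → Y → ℝ) (ν : X → Y → X → Y → ℝ) : ℝ :=
  ∑ x, ∑ y, ∑ x'', ∑ y'', ∑ x', ∑ y',
    |dX x x' - dY y y'| * ν x'' y'' x' y' * γ x'' y'' * γ x y

/-- The `k`-Gromov–Wasserstein distance between Markov chain metric spaces. -/
noncomputable def dGWk [Fintype X] [Fintype Y]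
    (mX : X → X → ℝ) (dX : X → X → ℝ) (μX : X → ℝ)
    (mY : Y → Y → ℝ) (dY : Y → Y → ℝ) (μY : Y → ℝ) (k : ℕ) : ℝ :=
  sInf {r : ℝ | ∃ (γ : X → Y → ℝ) (ν : X → Y → X → Y → ℝ),
      IsCoupling μX μY γ ∧ IsStepCoupling mX mY k ν ∧ r = disk dX dY γ ν}

/-- The absolute Gromov–Wasserstein distance between MCMSs: `sup_{k ≥ 1} d_GW^(k)`. -/
noncomputable def dGWMCMS [Fintype X] [Fintype Y]
    (mX : X → X → ℝ) (dX : X → X → ℝ) (μX : X → ℝ)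
    (mY : Y → Y → ℝ) (dY : Y → Y → ℝ) (μY : Y → ℝ) : ℝ :=
  ⨆ k : ℕ, dGWk mX dX μX mY dY μY (k + 1)

/-- Isomorphism of Markov chain metric spaces. -/
def MCMSIso [Fintype X] [Fintype Y]
    (mX : X → X → ℝ) (dX : X → X → ℝ) (μX : X → ℝ)
    (mY : Y → Y → ℝ) (dY : Y → Y → ℝ) (μY : Y → ℝ) : Prop :=
  ∃ ψ : X ≃ Y, (∀ x x', dY (ψ x) (ψ x') = dX x x') ∧
    (∀ x x', mY (ψ x) (ψ x') = mX x x') ∧ (∀ x, μY (ψ x) = μX x)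

/-- The decoupled Gromov–Wasserstein distance between finite metric measure spaces. -/
noncomputable def dGWbi [Fintype X] [Fintype Y]
    (dX : X → X → ℝ) (μX : X → ℝ) (dY : Y → Y → ℝ) (μY : Y → ℝ) : ℝ :=
  sInf {r : ℝ | ∃ γ γ' : X → Y → ℝ, IsCoupling μX μY γ ∧ IsCoupling μX μY γ' ∧
      r = ∑ x, ∑ y, ∑ x', ∑ y', |dX x x' - dY y y'| * γ' x' y' * γ x y}

/-- `k`-step couplings between the measures `μX` and `μY`
(`k = 0` gives ordinary couplings). -/
def IsMeasureStepCoupling [Fintype X] [Fintype Y] (mX : X → X → ℝ) (mY : Y → Y → ℝ)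
    (μX : X → ℝ) (μY : Y → ℝ) : ℕ → (X → Y → ℝ) → Prop
  | 0, γ => IsCoupling μX μY γ
  | k + 1, γk => ∃ (γ : X → Y → ℝ) (ν : X → Y → X → Y → ℝ),
      IsCoupling μX μY γ ∧ IsStepCoupling mX mY (k + 1) ν ∧
      γk = fun x' y' => ∑ x, ∑ y, ν x y x' y' * γ x y

/-- The WWL label iteration. -/
noncomputable def wwlLabel {V : Type*} [Fintype V] {d : ℕ} (G : SimpleGraph V)
    [DecidableRel G.Adj] (ℓ : V → EuclideanSpace ℝ (Fin d)) :
    ℕ → V → EuclideanSpace ℝ (Fin d)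
  | 0 => ℓ
  | i + 1 => fun v => (1 / 2 : ℝ) •
      (wwlLabel G ℓ i v + ((G.degree v : ℝ))⁻¹ • ∑ v' ∈ G.neighborFinset v, wwlLabel G ℓ i v')

/-- The stacked WWL label `L^k_G = (ℓ^0, …, ℓ^k)`, valued in Euclidean `ℝ^{d(k+1)}`. -/
noncomputable def stackedLabel {V : Type*} [Fintype V] {d : ℕ} (G : SimpleGraph V)
    [DecidableRel G.Adj] (ℓ : V → EuclideanSpace ℝ (Fin d)) (k : ℕ) (v : V) :
    EuclideanSpace ℝ (Fin (k + 1) × Fin d) :=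
  WithLp.toLp 2 (fun p : Fin (k + 1) × Fin d => wwlLabel G ℓ (p.1 : ℕ) v p.2)

/-!
(1) Averaging a Lipschitz map against the kernels moves labels by at most its Lipschitz
constant times the transport cost of any coupling of the kernels; by induction on the layers,
the depth-`j` MCNN labels of `x` and `y` are at most a constant times `D_j(x, y)` apart, and the
readouts at most a constant times `d_WL^(k)` apart.

(2) Let each `φ_j` send every depth-`j` label occurring in either chain to the indicator vector
of its value, so that the next label of `x` is the law of the current labels under `m_x`, and
let `ψ` be the distance to the readout of `𝒴`. Equal labels then have equal laws one layer
down, which can be coupled inside common label classes, where `D_j` vanishes by induction;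
equal readouts give in the same way `d_WL^(k) = 0`.
-/

section Transport

variable [Fintype X] [Fintype Y] {p : X → ℝ} {q : Y → ℝ}

lemma isCoupling_mul (hp : IsPMF p) (hq : IsPMF q) : IsCoupling p q (fun x y => p x * q y) :=
  ⟨fun x y => mul_nonneg (hp.1 x) (hq.1 y),
    fun x => by rw [← Finset.mul_sum, hq.2, mul_one],
    fun y => by rw [← Finset.sum_mul, hp.2, one_mul]⟩

lemma IsCoupling.dist_sum_smul_le {E : Type*} [NormedAddCommGroup E] [NormedSpace ℝ E]
    {γ : X → Y → ℝ} (hγ : IsCoupling p q γ) (f : X → E) (g : Y → E) :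
    dist (∑ x, p x • f x) (∑ y, q y • g y) ≤ ∑ x, ∑ y, dist (f x) (g y) * γ x y := by
  have hf : ∑ x, p x • f x = ∑ x, ∑ y, γ x y • f x := by
    simp only [← Finset.sum_smul, hγ.2.1]
  have hg : ∑ y, q y • g y = ∑ x, ∑ y, γ x y • g y := by
    rw [Finset.sum_comm]
    simp only [← Finset.sum_smul, hγ.2.2]
  rw [hf, hg]
  refine (dist_sum_sum_le _ _ _).trans (Finset.sum_le_sum fun x _ =>
    (dist_sum_sum_le _ _ _).trans_eq (Finset.sum_congr rfl fun y _ => ?_))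
  rw [dist_smul₀, Real.norm_of_nonneg (hγ.1 x y), mul_comm]

noncomputable def transportCost (p : X → ℝ) (q : Y → ℝ) (c : X → Y → ℝ) : ℝ :=
  sInf {r : ℝ | ∃ γ : X → Y → ℝ, IsCoupling p q γ ∧ r = ∑ x, ∑ y, c x y * γ x y}

lemma transportCost_le {c : X → Y → ℝ} (hc : ∀ x y, 0 ≤ c x y) {γ : X → Y → ℝ}
    (hγ : IsCoupling p q γ) : transportCost p q c ≤ ∑ x, ∑ y, c x y * γ x y := by
  refine csInf_le ⟨0, ?_⟩ ⟨γ, hγ, rfl⟩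
  rintro r ⟨γ', hγ', rfl⟩
  exact Finset.sum_nonneg fun x _ => Finset.sum_nonneg fun y _ => mul_nonneg (hc x y) (hγ'.1 x y)

lemma le_transportCost (hp : IsPMF p) (hq : IsPMF q) {c : X → Y → ℝ} {a : ℝ}
    (h : ∀ γ, IsCoupling p q γ → a ≤ ∑ x, ∑ y, c x y * γ x y) : a ≤ transportCost p q c :=
  le_csInf ⟨_, _, isCoupling_mul hp hq, rfl⟩ fun _ ⟨γ, hγ, hr⟩ => hr ▸ h γ hγ

lemma transportCost_nonneg (hp : IsPMF p) (hq : IsPMF q) {c : X → Y → ℝ}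
    (hc : ∀ x y, 0 ≤ c x y) : 0 ≤ transportCost p q c :=
  le_transportCost hp hq fun _ hγ =>
    Finset.sum_nonneg fun x _ => Finset.sum_nonneg fun y _ => mul_nonneg (hc x y) (hγ.1 x y)

lemma dist_sum_smul_le_mul_transportCost {E : Type*} [NormedAddCommGroup E] [NormedSpace ℝ E]
    (hp : IsPMF p) (hq : IsPMF q) {f : X → E} {g : Y → E} {c : X → Y → ℝ} {K : ℝ} (hK : 0 < K)
    (h : ∀ x y, dist (f x) (g y) ≤ K * c x y) :
    dist (∑ x, p x • f x) (∑ y, q y • g y) ≤ K * transportCost p q c := by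
  rw [← div_le_iff₀' hK]
  refine le_transportCost hp hq fun γ hγ => (div_le_iff₀' hK).2 ?_
  calc dist (∑ x, p x • f x) (∑ y, q y • g y)
      ≤ ∑ x, ∑ y, dist (f x) (g y) * γ x y := hγ.dist_sum_smul_le f g
    _ ≤ ∑ x, ∑ y, K * c x y * γ x y := by gcongr with x _ y _; exact hγ.1 x y; exact h x y
    _ = K * ∑ x, ∑ y, c x y * γ x y := by simp only [Finset.mul_sum, mul_assoc]

end Transport

section Stability

variable [Fintype X] [Fintype Y] {mX : X → X → ℝ} {mY : Y → Y → ℝ}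

lemma costIter_succ (D0 : X → Y → ℝ) (k : ℕ) (x : X) (y : Y) :
    costIter mX mY D0 (k + 1) x y = transportCost (mX x) (mY y) (costIter mX mY D0 k) := rfl

lemma costIter_nonneg (hmX : ∀ x, IsPMF (mX x)) (hmY : ∀ y, IsPMF (mY y)) {D0 : X → Y → ℝ}
    (hD0 : ∀ x y, 0 ≤ D0 x y) (k : ℕ) (x : X) (y : Y) : 0 ≤ costIter mX mY D0 k x y := by
  induction k generalizing x y with
  | zero => exact hD0 x y
  | succ k ih =>
    rw [costIter_succ]
    exact transportCost_nonneg (hmX x) (hmY y) ih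

lemma dWL_eq_transportCost {Z : Type*} [PseudoMetricSpace Z] (μX : X → ℝ) (μY : Y → ℝ)
    (ℓX : X → Z) (ℓY : Y → Z) (k : ℕ) :
    dWL mX μX ℓX mY μY ℓY k =
      transportCost μX μY (costIter mX mY (fun x y => dist (ℓX x) (ℓY y)) k) := rfl

lemma dist_sum_smul_comp_le {E F : Type*} [PseudoMetricSpace E] [NormedAddCommGroup F]
    [NormedSpace ℝ F] {p : X → ℝ} {q : Y → ℝ} (hp : IsPMF p) (hq : IsPMF q)
    {φ : E → F} {Kφ : ℝ≥0} (hφ : LipschitzWith Kφ φ) {a : X → E} {b : Y → E}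
    {c : X → Y → ℝ} {K : ℝ} (hK : 0 < K) (h : ∀ x y, dist (a x) (b y) ≤ K * c x y) :
    dist (∑ x, p x • φ (a x)) (∑ y, q y • φ (b y)) ≤ ((Kφ + 1) * K) * transportCost p q c := by
  refine dist_sum_smul_le_mul_transportCost hp hq (by positivity) fun x y => ?_
  calc dist (φ (a x)) (φ (b y)) ≤ Kφ * dist (a x) (b y) := hφ.dist_le_mul _ _
    _ ≤ (Kφ + 1) * (K * c x y) := by gcongr; linarith; exact h x y
    _ = (Kφ + 1) * K * c x y := by ring

lemma exists_dist_mcnnLabel_le (hmX : ∀ x, IsPMF (mX x)) (hmY : ∀ y, IsPMF (mY y)) {d k : ℕ}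
    (N : MCNN d k) (ℓX : X → EuclideanSpace ℝ (Fin d)) (ℓY : Y → EuclideanSpace ℝ (Fin d))
    (j : ℕ) : ∃ K > 0, ∀ x y, dist (mcnnLabel N mX ℓX j x) (mcnnLabel N mY ℓY j y) ≤
      K * costIter mX mY (fun x y => dist (ℓX x) (ℓY y)) j x y := by
  induction j with
  | zero => exact ⟨1, one_pos, fun x y => (one_mul _).ge⟩
  | succ j ih =>
    obtain ⟨K, hK, hdist⟩ := ih
    obtain ⟨Kφ, hφ⟩ := N.φ_lip j
    exact ⟨_, by positivity, fun x y => dist_sum_smul_comp_le (hmX x) (hmY y) hφ hK hdist⟩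

end Stability

section Pushforward

open Classical in
noncomputable def pushforward {Z : Type*} [Fintype X] (u : X → Z) (p : X → ℝ) (z : Z) : ℝ :=
  ∑ x with u x = z, p x

variable [Fintype X] [Fintype Y] {p : X → ℝ} {q : Y → ℝ} {Z : Type*}

open Classical in
lemma sum_mul_ite_eq_pushforward (u : X → Z) (p : X → ℝ) (z : Z) :
    ∑ x, p x * (if u x = z then 1 else 0) = pushforward u p z := by
  simp only [mul_ite, mul_one, mul_zero, ← Finset.sum_filter, pushforward]

lemma le_pushforward (hp : IsPMF p) (u : X → Z) (x : X) : p x ≤ pushforward u p (u x) := by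
  classical
  exact Finset.single_le_sum (fun x _ => hp.1 x) (Finset.mem_filter.2 ⟨Finset.mem_univ x, rfl⟩)

/-- Couple `p` and `q` independently on each common fibre of `u` and `v`. -/
lemma exists_isCoupling_of_pushforward_eq (hp : IsPMF p) (hq : IsPMF q) {u : X → Z}
    {v : Y → Z} (h : pushforward u p = pushforward v q) :
    ∃ γ, IsCoupling p q γ ∧ ∀ x y, γ x y ≠ 0 → u x = v y := by
  classical
  set w := pushforward u p
  have hw (z : Z) : 0 ≤ w z := Finset.sum_nonneg fun x _ => hp.1 x
  have hpw (x : X) : w (u x) = 0 → p x = 0 := fun h0 =>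
    le_antisymm (h0 ▸ le_pushforward hp u x) (hp.1 x)
  have hqw (y : Y) : w (v y) = 0 → q y = 0 := fun h0 =>
    le_antisymm (h0 ▸ h ▸ le_pushforward hq v y) (hq.1 y)
  refine ⟨fun x y => if u x = v y then p x * q y / w (u x) else 0, ⟨fun x y => ?_, fun x => ?_,
    fun y => ?_⟩, fun x y hxy => of_not_not fun huv => hxy (if_neg huv)⟩
  · dsimp only
    split_ifs
    exacts [div_nonneg (mul_nonneg (hp.1 x) (hq.1 y)) (hw _), le_rfl]
  · calc ∑ y, (if u x = v y then p x * q y / w (u x) else 0)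
        = p x / w (u x) * ∑ y, q y * (if v y = u x then 1 else 0) := by
          rw [Finset.mul_sum]
          refine Finset.sum_congr rfl fun y _ => ?_
          by_cases huv : u x = v y
          · rw [if_pos huv, if_pos huv.symm]; ring
          · rw [if_neg huv, if_neg (Ne.symm huv)]; ring
      _ = p x := by rw [sum_mul_ite_eq_pushforward, ← h, div_mul_cancel_of_imp (hpw x)]
  · calc ∑ x, (if u x = v y then p x * q y / w (u x) else 0)
        = q y / w (v y) * ∑ x, p x * (if u x = v y then 1 else 0) := by
          rw [Finset.mul_sum]
          refine Finset.sum_congr rfl fun x _ => ?_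
          by_cases huv : u x = v y
          · rw [if_pos huv, if_pos huv, huv]; ring
          · rw [if_neg huv, if_neg huv]; ring
      _ = q y := by rw [sum_mul_ite_eq_pushforward, div_mul_cancel_of_imp (hqw y)]

lemma transportCost_eq_zero_of_pushforward_eq (hp : IsPMF p) (hq : IsPMF q) {u : X → Z}
    {v : Y → Z} (h : pushforward u p = pushforward v q) {c : X → Y → ℝ}
    (hc : ∀ x y, 0 ≤ c x y) (hcuv : ∀ x y, u x = v y → c x y = 0) :
    transportCost p q c = 0 := by
  obtain ⟨γ, hγ, hsupp⟩ := exists_isCoupling_of_pushforward_eq hp hq h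
  refine le_antisymm ((transportCost_le hc hγ).trans_eq ?_) (transportCost_nonneg hp hq hc)
  refine Finset.sum_eq_zero fun x _ => Finset.sum_eq_zero fun y _ => ?_
  by_cases hxy : γ x y = 0
  · rw [hxy, mul_zero]
  · rw [hcuv x y (hsupp x y hxy), zero_mul]

end Pushforward

lemma lipschitzWith_max_zero_one_sub_dist_div {E : Type*} [PseudoMetricSpace E] (a : E) {δ : ℝ}
    (hδ : 0 < δ) :
    LipschitzWith (Real.toNNReal δ⁻¹) fun z => max 0 (1 - dist z a / δ) := by
  refine LipschitzWith.of_le_add_mul' _ fun z w => max_le (by positivity) ?_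
  have hw : 1 - dist w a / δ ≤ max 0 (1 - dist w a / δ) := le_max_right _ _
  have htri : dist w a / δ ≤ dist z a / δ + δ⁻¹ * dist z w := by
    rw [inv_mul_eq_div, ← add_div]
    gcongr
    linarith [dist_triangle w z a, dist_comm z w]
  linarith

section IndicatorLayer

variable {P E : Type*} [Fintype P] [MetricSpace E]

lemma exists_pos_le_dist_of_ne (c : P → E) :
    ∃ δ > 0, ∀ s t, c s ≠ c t → δ ≤ dist (c s) (c t) := by
  classical
  rcases isEmpty_or_nonempty P with hP | hP
  · exact ⟨1, one_pos, fun s => isEmptyElim s⟩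
  let r : P × P → ℝ := fun st => if c st.1 = c st.2 then 1 else dist (c st.1) (c st.2)
  obtain ⟨st₀, hmin⟩ := Finite.exists_min r
  refine ⟨r st₀, ?_, fun s t hst => (hmin (s, t)).trans_eq (if_neg hst)⟩
  dsimp only [r]
  split_ifs with h
  exacts [one_pos, dist_pos.2 h]

open Classical in
lemma exists_lipschitz_indicator (c : P → E) :
    ∃ φ : E → EuclideanSpace ℝ (Fin (Fintype.card P)), (∃ K, LipschitzWith K φ) ∧
      ∀ s i, φ (c s) i = if c s = c ((Fintype.equivFin P).symm i) then 1 else 0 := by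
  obtain ⟨δ, hδ, hsep⟩ := exists_pos_le_dist_of_ne c
  refine ⟨fun z => WithLp.toLp 2 fun i => max 0 (1 - dist z (c ((Fintype.equivFin P).symm i)) / δ),
    ⟨_, (PiLp.lipschitzWith_toLp 2 _).comp (LipschitzWith.of_dist_le_mul fun z w =>
      (dist_pi_le_iff (by positivity)).2 fun i =>
        (lipschitzWith_max_zero_one_sub_dist_div _ hδ).dist_le_mul z w)⟩, fun s i => ?_⟩
  dsimp only
  split_ifs with h
  · rw [h, dist_self, zero_div, sub_zero, max_eq_right zero_le_one]
  · exact max_eq_left (by linarith [(one_le_div hδ).2 (hsep _ _ h)])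

noncomputable def indicatorLayer (c : P → E) : E → EuclideanSpace ℝ (Fin (Fintype.card P)) :=
  Classical.choose (exists_lipschitz_indicator c)

lemma lipschitzWith_indicatorLayer (c : P → E) : ∃ K, LipschitzWith K (indicatorLayer c) :=
  (Classical.choose_spec (exists_lipschitz_indicator c)).1

open Classical in
lemma indicatorLayer_apply (c : P → E) (s : P) (i : Fin (Fintype.card P)) :
    indicatorLayer c (c s) i = if c s = c ((Fintype.equivFin P).symm i) then 1 else 0 :=
  (Classical.choose_spec (exists_lipschitz_indicator c)).2 s i

variable [Fintype X] [Fintype Y]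

lemma pushforward_eq_of_sum_smul_indicatorLayer_eq (c : P → E) {f : X → P} {g : Y → P}
    {p : X → ℝ} {q : Y → ℝ}
    (h : ∑ x, p x • indicatorLayer c (c (f x)) = ∑ y, q y • indicatorLayer c (c (g y))) :
    pushforward (c ∘ f) p = pushforward (c ∘ g) q := by
  funext z
  by_cases hz : ∃ t, c t = z
  · obtain ⟨t, rfl⟩ := hz
    have h_t := congrArg (fun v => v (Fintype.equivFin P t)) h
    simp only [WithLp.ofLp_sum, WithLp.ofLp_smul, Finset.sum_apply, Pi.smul_apply, smul_eq_mul,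
      indicatorLayer_apply] at h_t
    rwa [sum_mul_ite_eq_pushforward, sum_mul_ite_eq_pushforward, Equiv.symm_apply_apply] at h_t
  · simp only [pushforward, Function.comp_apply, not_exists.1 hz, Finset.filter_false,
      Finset.sum_empty]

end IndicatorLayer

section Separation

variable [Fintype X] [Fintype Y] {d : ℕ} (mX : X → X → ℝ) (mY : Y → Y → ℝ)
  (ℓX : X → EuclideanSpace ℝ (Fin d)) (ℓY : Y → EuclideanSpace ℝ (Fin d))

noncomputable def separatingLabel :
    (j : ℕ) → X ⊕ Y → EuclideanSpace ℝ (Fin (mcnnDim d (fun _ => Fintype.card (X ⊕ Y)) j))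
  | 0 => Sum.elim ℓX ℓY
  | j + 1 => Sum.elim
      (fun x => ∑ x', mX x x' • indicatorLayer (separatingLabel j) (separatingLabel j (.inl x')))
      (fun y => ∑ y', mY y y' • indicatorLayer (separatingLabel j) (separatingLabel j (.inr y')))

noncomputable def separatingMCNN (μY : Y → ℝ) (k : ℕ) : MCNN d k where
  dims _ := Fintype.card (X ⊕ Y)
  φ j := indicatorLayer (separatingLabel mX mY ℓX ℓY j)
  φ_lip _ := lipschitzWith_indicatorLayer _
  ψ z := dist z (∑ y, μY y • indicatorLayer (separatingLabel mX mY ℓX ℓY k)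
    (separatingLabel mX mY ℓX ℓY k (.inr y)))
  ψ_cont := continuous_id.dist continuous_const

lemma mcnnLabel_separatingMCNN (μY : Y → ℝ) (k j : ℕ) :
    Sum.elim (mcnnLabel (separatingMCNN mX mY ℓX ℓY μY k) mX ℓX j)
      (mcnnLabel (separatingMCNN mX mY ℓX ℓY μY k) mY ℓY j) = separatingLabel mX mY ℓX ℓY j := by
  induction j with
  | zero => rfl
  | succ j ih =>
    funext s
    rcases s with x | y
    · exact Finset.sum_congr rfl fun x' _ => by rw [← congrFun ih (.inl x')]; rfl
    · exact Finset.sum_congr rfl fun y' _ => by rw [← congrFun ih (.inr y')]; rfl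

variable {mX mY ℓX ℓY}

lemma costIter_eq_zero_of_separatingLabel_eq (hmX : ∀ x, IsPMF (mX x))
    (hmY : ∀ y, IsPMF (mY y)) (j : ℕ) (x : X) (y : Y)
    (h : separatingLabel mX mY ℓX ℓY j (.inl x) = separatingLabel mX mY ℓX ℓY j (.inr y)) :
    costIter mX mY (fun x y => dist (ℓX x) (ℓY y)) j x y = 0 := by
  induction j generalizing x y with
  | zero => exact dist_eq_zero.2 h
  | succ j ih =>
    rw [costIter_succ]
    exact transportCost_eq_zero_of_pushforward_eq (hmX x) (hmY y)
      (pushforward_eq_of_sum_smul_indicatorLayer_eq _ h)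
      (costIter_nonneg hmX hmY (fun _ _ => dist_nonneg) j) ih

lemma dWL_eq_zero_of_mcnnEval_separatingMCNN_eq {μX : X → ℝ} {μY : Y → ℝ} (hX : IsMMC mX μX)
    (hY : IsMMC mY μY) (k : ℕ)
    (h : mcnnEval (separatingMCNN mX mY ℓX ℓY μY k) mX μX ℓX =
      mcnnEval (separatingMCNN mX mY ℓX ℓY μY k) mY μY ℓY) :
    dWL mX μX ℓX mY μY ℓY k = 0 := by
  set N := separatingMCNN mX mY ℓX ℓY μY k
  set c := separatingLabel mX mY ℓX ℓY k
  have hlabel := congrFun (mcnnLabel_separatingMCNN mX mY ℓX ℓY μY k k)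
  have hlX (x : X) : mcnnLabel N mX ℓX k x = c (.inl x) := hlabel (.inl x)
  have hlY (y : Y) : mcnnLabel N mY ℓY k y = c (.inr y) := hlabel (.inr y)
  replace h : dist (∑ x, μX x • indicatorLayer c (mcnnLabel N mX ℓX k x))
      (∑ y, μY y • indicatorLayer c (c (.inr y))) =
      dist (∑ y, μY y • indicatorLayer c (mcnnLabel N mY ℓY k y))
      (∑ y, μY y • indicatorLayer c (c (.inr y))) := h
  simp only [hlX, hlY, dist_self, dist_eq_zero] at h
  exact transportCost_eq_zero_of_pushforward_eq hX.2.1 hY.2.1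
    (pushforward_eq_of_sum_smul_indicatorLayer_eq _ h)
    (costIter_nonneg hX.1 hY.1 (fun _ _ => dist_nonneg) k)
    (costIter_eq_zero_of_separatingLabel_eq hX.1 hY.1 k)

end Separation

theorem mcnn_discriminative {X Y : Type*} [Fintype X] [Fintype Y] {d : ℕ}
    (mX : X → X → ℝ) (μX : X → ℝ) (ℓX : X → EuclideanSpace ℝ (Fin d))
    (mY : Y → Y → ℝ) (μY : Y → ℝ) (ℓY : Y → EuclideanSpace ℝ (Fin d))
    (hX : IsMMC mX μX) (hY : IsMMC mY μY) (k : ℕ) :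
    (dWL mX μX ℓX mY μY ℓY k = 0 →
      ∀ N : MCNN d k, mcnnEval N mX μX ℓX = mcnnEval N mY μY ℓY) ∧
    (0 < dWL mX μX ℓX mY μY ℓY k →
      ∃ N : MCNN d k, mcnnEval N mX μX ℓX ≠ mcnnEval N mY μY ℓY) := by
  refine ⟨fun h0 N => ?_, fun hpos => ⟨separatingMCNN mX mY ℓX ℓY μY k, fun h =>
    hpos.ne' (dWL_eq_zero_of_mcnnEval_separatingMCNN_eq hX hY k h)⟩⟩
  obtain ⟨K, hK, hlabel⟩ := exists_dist_mcnnLabel_le hX.1 hY.1 N ℓX ℓY k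
  obtain ⟨Kφ, hφ⟩ := N.φ_lip k
  have hreadout := dist_sum_smul_comp_le hX.2.1 hY.2.1 hφ hK hlabel
  rw [← dWL_eq_transportCost, h0, mul_zero, dist_le_zero] at hreadout
  rw [mcnnEval, mcnnEval, hreadout]

end WLGW
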